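/- arXiv:2008.03932 — 2 statements merged into one kernel-verified Lean document; each statement's English description precedes it below -/
import Mathlib

section
/- Let (a_{m,n}) be a double sequence of reals in [0,1]. Define f(s) := 2s² + 2s and G(ε,g) := ((f ∘ g)^M)^(⌈1/ε⌉)(0). Then for all ε > 0 and all g : ℕ → ℕ there exist N ≤ G(ε,g) and p, q ≤ N such that for all i, j ≤ g(N), a_{p,q} ≤ a_{i,j} + ε. -/
/-- `iterMax g` is `g^M`, i.e. `g^M(n) = max_{i ≤ n} g(i)`. -/
def iterMax (g : ℕ → ℕ) (n : ℕ) : ℕ := Finset.sup (Finset.range (n+1)) g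

/-- `f(s) := 2s² + 2s`. -/
def fPair (s : ℕ) : ℕ := 2*s^2 + 2*s

/-- `G(ε,g) := ((f ∘ g)^M)^(⌈1/ε⌉)(0)`. -/
noncomputable def Gfun (ε : ℝ) (g : ℕ → ℕ) : ℕ := (iterMax (fPair ∘ g))^[⌈1/ε⌉₊] 0

/-!
If no `N` among `0 = N₀ ≤ N₁ ≤ ⋯ ≤ N_K`, where `N_{k+1} = h(N_k)` and `h ≥ g` is monotone, works,
then each failure at `N_k` turns a pair `p, q ≤ N_k` into a pair `i, j ≤ g(N_k) ≤ N_{k+1}` with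
value smaller by more than `ε`. Starting from `a₀₀ ≤ 1` and failing `K + 1` times with `Kε ≥ 1`
would push a value of `a` below `0`.
-/

open Set

lemma monotone_iterMax (g : ℕ → ℕ) : Monotone (iterMax g) :=
  fun _ _ hmn => Finset.sup_mono (Finset.range_subset_range.mpr (Nat.succ_le_succ hmn))

lemma le_iterMax (g : ℕ → ℕ) (n : ℕ) : g n ≤ iterMax g n :=
  Finset.le_sup (Finset.self_mem_range_succ n)

lemma le_fPair (s : ℕ) : s ≤ fPair s := by
  unfold fPair
  nlinarith

lemma exists_add_mul_le_of_forall_lt_descent (a : ℕ → ℕ → ℝ) (ε : ℝ) (g N : ℕ → ℕ)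
    (hN : ∀ k, g (N k) ≤ N (k + 1)) (K : ℕ)
    (hdescent : ∀ k < K, ∀ p ≤ N k, ∀ q ≤ N k,
      ∃ i ≤ g (N k), ∃ j ≤ g (N k), a i j + ε < a p q) :
    ∃ p ≤ N K, ∃ q ≤ N K, a p q + K * ε ≤ a 0 0 := by
  induction K with
  | zero => exact ⟨0, Nat.zero_le _, 0, Nat.zero_le _, by simp⟩
  | succ k ih =>
    obtain ⟨p, hp, q, hq, hpq⟩ := ih fun l hl => hdescent l (Nat.lt_succ_of_lt hl)
    obtain ⟨i, hi, j, hj, hij⟩ := hdescent k (Nat.lt_succ_self k) p hp q hq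
    refine ⟨i, hi.trans (hN k), j, hj.trans (hN k), ?_⟩
    push_cast
    linarith

theorem exists_le_iterate_forall_le_add (a : ℕ → ℕ → ℝ) (ha : ∀ m n, a m n ∈ Icc (0 : ℝ) 1)
    (ε : ℝ) (hε : 0 < ε) (g h : ℕ → ℕ) (hh : Monotone h) (hgh : ∀ n, g n ≤ h n)
    (K : ℕ) (hK : 1 ≤ K * ε) :
    ∃ N ≤ h^[K] 0, ∃ p ≤ N, ∃ q ≤ N, ∀ i ≤ g N, ∀ j ≤ g N, a p q ≤ a i j + ε := by
  by_contra! hfail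
  have hiter : Monotone fun k => h^[k] 0 := hh.monotone_iterate_of_le_map (Nat.zero_le _)
  have hstep : ∀ k, g (h^[k] 0) ≤ h^[k + 1] 0 := fun k => by
    rw [Function.iterate_succ_apply']
    exact hgh _
  obtain ⟨p, -, q, -, hpq⟩ := exists_add_mul_le_of_forall_lt_descent a ε g (fun k => h^[k] 0)
    hstep (K + 1) fun k hk => hfail _ (hiter (Nat.le_of_lt_succ hk))
  have h00 := (ha 0 0).2
  have hpq0 := (ha p q).1
  push_cast at hpq
  linarith

theorem stmt2 (a : ℕ → ℕ → ℝ) (ha : ∀ m n, a m n ∈ Set.Icc (0:ℝ) 1)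
    (ε : ℝ) (hε : 0 < ε) (g : ℕ → ℕ) :
    ∃ N ≤ Gfun ε g, ∃ p ≤ N, ∃ q ≤ N,
      ∀ i ≤ g N, ∀ j ≤ g N, a p q ≤ a i j + ε := by
  have hK : 1 ≤ (⌈1 / ε⌉₊ : ℝ) * ε := by
    rw [← div_le_iff₀ hε]
    exact Nat.le_ceil _
  exact exists_le_iterate_forall_le_add a ha ε hε g _ (monotone_iterMax _)
    (fun n => (le_fPair _).trans (le_iterMax (fPair ∘ g) n)) _ hK
end

section
/- Let X be a Banach space, d ≥ 1, and T_1, ..., T_d : X → X commuting linear contractions. Let x ∈ X with ‖x‖ ≤ 1, and define ergodic averages x_n := (n+1)^(−d) Σ_{k ∈ [0,n]^d} T^k x. Define Φ(d,δ,Q) := max(Q, ⌈2^d Q / δ⌉). Then for every δ > 0, every Q ∈ ℕ, and every convex combination z = Σ_{j ∈ [0,Q]^d} c_j T^j x with (c_j) ⊆ [0,1] and Σ_j c_j = 1, and every n ≥ Φ(d,δ,Q), one has ‖x_n‖ ≤ ‖z‖ + δ. -/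
/-- `box d n` is `[0,n]^d`. -/
def box (d n : ℕ) : Finset (Fin d → ℕ) := Fintype.piFinset fun _ => Finset.range (n+1)

/-- `Tpow T k = T₁^{k₁} ⋯ T_d^{k_d}`. -/
def Tpow {X : Type*} [AddCommGroup X] [Module ℝ X] {d : ℕ}
    (T : Fin d → X →ₗ[ℝ] X) (k : Fin d → ℕ) : X →ₗ[ℝ] X :=
  (List.ofFn fun l => T l ^ k l).prod

/-- The multi-parameter ergodic average `x_n = (n+1)^{-d} ∑_{k ∈ [0,n]^d} T^k x`. -/
noncomputable def erg {X : Type*} [AddCommGroup X] [Module ℝ X] {d : ℕ}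
    (T : Fin d → X →ₗ[ℝ] X) (x : X) (n : ℕ) : X :=
  ((n+1 : ℝ)^d)⁻¹ • ∑ k ∈ box d n, Tpow T k x

/-- `Φ(d,δ,Q) := max(Q, ⌈2^d Q / δ⌉)`. -/
noncomputable def Phi (d : ℕ) (δ : ℝ) (Q : ℕ) : ℕ := max Q ⌈(2^d * Q : ℝ) / δ⌉₊

/-! Let `z = ∑ c_j T^j x`. Averaging the contractions `T^k` over the box `[0,n]^d` does not
increase norms, so the average of `T^k z` has norm at most `‖z‖`. It differs from `x_n` by the
convex combination over `j` of the differences between the averages of `T^k x` over the box and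
over its translate by `j`; a translate by `j ∈ [0,Q]^d` still contains `[Q,n]^d`, so by Bernoulli's
inequality each difference is at most `2dQ‖x‖/(n+1)`, which is at most `δ` once `n ≥ Φ(d,δ,Q)`
because `2d ≤ 2^d`. -/

open Finset hiding box

open scoped IsMulCommutative in
theorem List.prod_ofFn_pow_mul_prod_ofFn_pow {M : Type*} [Monoid M] {d : ℕ} (T : Fin d → M)
    (hT : ∀ l m, Commute (T l) (T m)) (k j : Fin d → ℕ) :
    (List.ofFn fun l => T l ^ k l).prod * (List.ofFn fun l => T l ^ j l).prod =
      (List.ofFn fun l => T l ^ (k l + j l)).prod := by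
  have := Submonoid.isMulCommutative_closure M (s := Set.range T)
    (by rintro _ ⟨l, rfl⟩ _ ⟨m, rfl⟩; exact hT l m)
  let t : Fin d → Submonoid.closure (Set.range T) :=
    fun l => ⟨T l, Submonoid.subset_closure ⟨l, rfl⟩⟩
  have hprod (k : Fin d → ℕ) :
      (List.ofFn fun l => T l ^ k l).prod = ((∏ l, t l ^ k l : Submonoid.closure _) : M) := by
    rw [← List.prod_ofFn, Submonoid.coe_list_prod, List.map_ofFn]
    rfl
  simp only [hprod, ← Submonoid.coe_mul, ← prod_mul_distrib, ← pow_add]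

theorem Finset.norm_sum_sub_sum_le_of_card_eq {ι E : Type*} [SeminormedAddCommGroup E]
    [DecidableEq ι] {s t : Finset ι} (hst : #s = #t) {f : ι → E} {C : ℝ}
    (hf : ∀ i ∈ s ∪ t, ‖f i‖ ≤ C) :
    ‖∑ i ∈ s, f i - ∑ i ∈ t, f i‖ ≤ 2 * C * #(s \ t) := by
  have hbound (u : Finset ι) (hu : u ⊆ s ∪ t) : ‖∑ i ∈ u, f i‖ ≤ C * #u := by
    simpa [mul_comm] using norm_sum_le_of_le u fun i hi => hf i (hu hi)
  rw [← sum_sdiff_sub_sum_sdiff]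
  calc ‖∑ i ∈ s \ t, f i - ∑ i ∈ t \ s, f i‖
      ≤ ‖∑ i ∈ s \ t, f i‖ + ‖∑ i ∈ t \ s, f i‖ := norm_sub_le _ _
    _ ≤ C * #(s \ t) + C * #(t \ s) :=
        add_le_add (hbound _ (sdiff_subset.trans subset_union_left))
          (hbound _ (sdiff_subset.trans subset_union_right))
    _ = 2 * C * #(s \ t) := by rw [card_sdiff_comm hst.symm]; ring

theorem Nat.two_mul_le_two_pow (d : ℕ) : 2 * d ≤ 2 ^ d := by
  cases d with
  | zero => simp
  | succ d => rw [pow_succ']; exact Nat.mul_le_mul_left 2 Nat.lt_two_pow_self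

theorem pow_sub_sub_pow_le {a q : ℝ} (ha : 0 < a) (hq : q ≤ 2 * a) (d : ℕ) :
    a ^ d - (a - q) ^ d ≤ d * q / a * a ^ d := by
  have hbernoulli := one_add_mul_le_pow (a := -(q / a)) (by rwa [neg_le_neg_iff, div_le_iff₀ ha]) d
  have hscale : (a - q) ^ d = (1 + -(q / a)) ^ d * a ^ d := by
    rw [← mul_pow]; congr 1; field_simp; ring
  have := mul_le_mul_of_nonneg_right hbernoulli (pow_pos ha d).le
  rw [hscale]
  linear_combination this

theorem card_box (d n : ℕ) : #(box d n) = (n + 1) ^ d := by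
  simp [box, Fintype.card_piFinset]

theorem card_box_sdiff_image_add_le {d n Q : ℕ} {j : Fin d → ℕ} (hj : j ∈ box d Q) :
    #(box d n \ (box d n).image (· + j)) + (n + 1 - Q) ^ d ≤ (n + 1) ^ d := by
  classical
  simp only [box, Fintype.mem_piFinset, mem_range, Nat.lt_succ_iff] at hj
  set C := Fintype.piFinset fun l => Icc (j l) n
  have hC_box : C ⊆ box d n := fun k hk => by
    simp only [C, box, Fintype.mem_piFinset, mem_Icc, mem_range] at hk ⊢
    exact fun l => Nat.lt_succ_of_le (hk l).2
  have hC_image : C ⊆ (box d n).image (· + j) := fun k hk => by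
    simp only [C, Fintype.mem_piFinset, mem_Icc] at hk
    refine mem_image.2 ⟨k - j, ?_, funext fun l => Nat.sub_add_cancel (hk l).1⟩
    simp only [box, Fintype.mem_piFinset, mem_range, Pi.sub_apply]
    exact fun l => Nat.lt_succ_of_le ((Nat.sub_le _ _).trans (hk l).2)
  have hcard_C : (n + 1 - Q) ^ d ≤ #C := by
    simpa [C, Fintype.card_piFinset] using
      pow_card_le_prod univ (fun l => #(Icc (j l) n)) (n + 1 - Q) fun l _ => by
        rw [Nat.card_Icc]; have := hj l; omega
  calc #(box d n \ (box d n).image (· + j)) + (n + 1 - Q) ^ d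
      ≤ #(box d n \ C) + #C := add_le_add (card_le_card (sdiff_le_sdiff_left hC_image)) hcard_C
    _ = (n + 1) ^ d := by rw [card_sdiff_add_card_eq_card hC_box, card_box]

theorem two_mul_mul_div_le_of_Phi_le {d n Q : ℕ} {δ : ℝ} (hδ : 0 < δ) (hn : Phi d δ Q ≤ n) :
    2 * d * Q / (n + 1) ≤ δ := by
  have hceil : (2 ^ d * Q : ℝ) / δ ≤ n := Nat.ceil_le.1 ((le_max_right _ _).trans hn)
  have h2d : (2 * d : ℝ) ≤ 2 ^ d := by exact_mod_cast Nat.two_mul_le_two_pow d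
  rw [div_le_iff₀ hδ] at hceil
  rw [div_le_iff₀ (by positivity)]
  nlinarith [(Nat.cast_nonneg Q : (0 : ℝ) ≤ Q)]

def contractionSubmonoid (X : Type*) [NormedAddCommGroup X] [NormedSpace ℝ X] :
    Submonoid (X →ₗ[ℝ] X) where
  carrier := {f | ∀ y, ‖f y‖ ≤ ‖y‖}
  one_mem' _ := le_rfl
  mul_mem' hf hg y := (hf _).trans (hg y)

section Erg

variable {X : Type*} [NormedAddCommGroup X] [NormedSpace ℝ X] {d : ℕ} (T : Fin d → X →ₗ[ℝ] X)

theorem Tpow_mem_contractionSubmonoid (hcontr : ∀ l (y : X), ‖T l y‖ ≤ ‖y‖) (k : Fin d → ℕ) :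
    Tpow T k ∈ contractionSubmonoid X :=
  Submonoid.list_prod_mem _ fun _ hf => by
    obtain ⟨l, rfl⟩ := List.mem_ofFn.1 hf
    exact pow_mem (show T l ∈ contractionSubmonoid X from hcontr l) _

theorem Tpow_apply_Tpow (hcomm : ∀ l m, T l ∘ₗ T m = T m ∘ₗ T l) (k j : Fin d → ℕ) (y : X) :
    Tpow T k (Tpow T j y) = Tpow T (k + j) y :=
  LinearMap.congr_fun (List.prod_ofFn_pow_mul_prod_ofFn_pow T hcomm k j) y

theorem norm_erg_le (hcontr : ∀ l (y : X), ‖T l y‖ ≤ ‖y‖) (y : X) (n : ℕ) :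
    ‖erg T y n‖ ≤ ‖y‖ := by
  have hsum : ‖∑ k ∈ box d n, Tpow T k y‖ ≤ (n + 1 : ℝ) ^ d * ‖y‖ := by
    simpa [card_box] using
      norm_sum_le_of_le (box d n) fun k _ => Tpow_mem_contractionSubmonoid T hcontr k y
  rw [erg, norm_smul, norm_inv, norm_pow, Real.norm_of_nonneg (by positivity)]
  exact inv_mul_le_of_le_mul₀ (by positivity) (norm_nonneg _) hsum

theorem erg_sum_smul {ι : Type*} (s : Finset ι) (c : ι → ℝ) (y : ι → X) (n : ℕ) :
    erg T (∑ i ∈ s, c i • y i) n = ∑ i ∈ s, c i • erg T (y i) n := by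
  simp only [erg, map_sum, map_smul, smul_sum]
  rw [sum_comm]
  simp only [smul_comm (c _)]

theorem norm_erg_sub_erg_Tpow_le (hcomm : ∀ l m, T l ∘ₗ T m = T m ∘ₗ T l)
    (hcontr : ∀ l (y : X), ‖T l y‖ ≤ ‖y‖) (x : X) {n Q : ℕ} (hQn : Q ≤ n + 1)
    {j : Fin d → ℕ} (hj : j ∈ box d Q) :
    ‖erg T x n - erg T (Tpow T j x) n‖ ≤ 2 * d * Q / (n + 1) * ‖x‖ := by
  classical
  set B := box d n
  have hshift : ∑ k ∈ B, Tpow T k (Tpow T j x) = ∑ k ∈ B.image (· + j), Tpow T k x := by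
    rw [sum_image fun a _ b _ h => add_right_cancel h]
    simp only [Tpow_apply_Tpow T hcomm]
  have hcard : #B = #(B.image (· + j)) := (card_image_of_injective _ (add_left_injective j)).symm
  have hdiff := norm_sum_sub_sum_le_of_card_eq hcard (f := fun k => Tpow T k x)
    fun k _ => Tpow_mem_contractionSubmonoid T hcontr k x
  have hcount : (#(B \ B.image (· + j)) : ℝ) ≤ (n + 1) ^ d - (n + 1 - Q) ^ d := by
    have hQ : ((n + 1 - Q : ℕ) : ℝ) = n + 1 - Q := by push_cast [Nat.cast_sub hQn]; ring
    rw [le_sub_iff_add_le, ← hQ]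
    exact_mod_cast card_box_sdiff_image_add_le (n := n) hj
  have hpos : (0 : ℝ) < n + 1 := by positivity
  have hQn' : (Q : ℝ) ≤ n + 1 := by exact_mod_cast hQn
  rw [erg, erg, hshift, ← smul_sub, norm_smul, norm_inv, norm_pow,
    Real.norm_of_nonneg hpos.le]
  refine inv_mul_le_of_le_mul₀ (by positivity) (by positivity) ?_
  calc ‖∑ k ∈ B, Tpow T k x - ∑ k ∈ B.image (· + j), Tpow T k x‖
      ≤ 2 * ‖x‖ * ((n + 1) ^ d - (n + 1 - Q) ^ d) :=
        hdiff.trans (mul_le_mul_of_nonneg_left hcount (by positivity))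
    _ ≤ 2 * ‖x‖ * (d * Q / (n + 1) * (n + 1) ^ d) := by
        gcongr
        exact pow_sub_sub_pow_le hpos (by linarith) d
    _ = _ := by ring

theorem norm_erg_sub_erg_convex_le (hcomm : ∀ l m, T l ∘ₗ T m = T m ∘ₗ T l)
    (hcontr : ∀ l (y : X), ‖T l y‖ ≤ ‖y‖) (x : X) {n Q : ℕ} (hQn : Q ≤ n + 1)
    {c : (Fin d → ℕ) → ℝ} (hc : ∀ j ∈ box d Q, 0 ≤ c j) (hsum : ∑ j ∈ box d Q, c j = 1) :
    ‖erg T x n - erg T (∑ j ∈ box d Q, c j • Tpow T j x) n‖ ≤ 2 * d * Q / (n + 1) * ‖x‖ := by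
  have hx_avg : erg T x n = ∑ j ∈ box d Q, c j • erg T x n := by
    rw [← sum_smul, hsum, one_smul]
  rw [erg_sum_smul, hx_avg, ← sum_sub_distrib]
  simp only [← smul_sub]
  calc ‖∑ j ∈ box d Q, c j • (erg T x n - erg T (Tpow T j x) n)‖
      ≤ ∑ j ∈ box d Q, c j * (2 * d * Q / (n + 1) * ‖x‖) := by
        refine (norm_sum_le _ _).trans (sum_le_sum fun j hj => ?_)
        rw [norm_smul, Real.norm_of_nonneg (hc j hj)]
        exact mul_le_mul_of_nonneg_left
          (norm_erg_sub_erg_Tpow_le T hcomm hcontr x hQn hj) (hc j hj)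
    _ = 2 * d * Q / (n + 1) * ‖x‖ := by rw [← sum_mul, hsum, one_mul]

end Erg

theorem stmt7_general {X : Type*} [NormedAddCommGroup X] [NormedSpace ℝ X]
    (d : ℕ) (T : Fin d → X →ₗ[ℝ] X)
    (hcomm : ∀ l m, T l ∘ₗ T m = T m ∘ₗ T l)
    (hcontr : ∀ l (y : X), ‖T l y‖ ≤ ‖y‖)
    (x : X) (hx : ‖x‖ ≤ 1)
    (δ : ℝ) (hδ : 0 < δ)
    (Q : ℕ) (c : (Fin d → ℕ) → ℝ) (hc : ∀ j ∈ box d Q, c j ∈ Set.Icc (0:ℝ) 1)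
    (hsum : ∑ j ∈ box d Q, c j = 1) :
    ∀ n, Phi d δ Q ≤ n →
      ‖erg T x n‖ ≤ ‖∑ j ∈ box d Q, c j • Tpow T j x‖ + δ := by
  intro n hn
  set z := ∑ j ∈ box d Q, c j • Tpow T j x
  have hQn : Q ≤ n + 1 := ((le_max_left _ _).trans hn).trans n.le_succ
  have hdiff : ‖erg T x n - erg T z n‖ ≤ δ :=
    calc ‖erg T x n - erg T z n‖ ≤ 2 * d * Q / (n + 1) * ‖x‖ :=
          norm_erg_sub_erg_convex_le T hcomm hcontr x hQn (fun j hj => (hc j hj).1) hsum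
      _ ≤ 2 * d * Q / (n + 1) := mul_le_of_le_one_right (by positivity) hx
      _ ≤ δ := two_mul_mul_div_le_of_Phi_le hδ hn
  calc ‖erg T x n‖ ≤ ‖erg T z n‖ + ‖erg T x n - erg T z n‖ := norm_le_norm_add_norm_sub' _ _
    _ ≤ ‖z‖ + δ := add_le_add (norm_erg_le T hcontr z n) hdiff

theorem stmt7 {X : Type*} [NormedAddCommGroup X] [NormedSpace ℝ X] [CompleteSpace X]
    (d : ℕ) (hd : 1 ≤ d) (T : Fin d → X →ₗ[ℝ] X)
    (hcomm : ∀ l m, T l ∘ₗ T m = T m ∘ₗ T l)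
    (hcontr : ∀ l (y : X), ‖T l y‖ ≤ ‖y‖)
    (x : X) (hx : ‖x‖ ≤ 1)
    (δ : ℝ) (hδ : 0 < δ)
    (Q : ℕ) (c : (Fin d → ℕ) → ℝ) (hc : ∀ j ∈ box d Q, c j ∈ Set.Icc (0:ℝ) 1)
    (hsum : ∑ j ∈ box d Q, c j = 1) :
    ∀ n, Phi d δ Q ≤ n →
      ‖erg T x n‖ ≤ ‖∑ j ∈ box d Q, c j • Tpow T j x‖ + δ :=
  stmt7_general d T hcomm hcontr x hx δ hδ Q c hc hsum
end
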